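/- For the classical hidden-variable distributions ℙ_{a₁a₂} on pairs (λ₁,λ₂) ∈ {0,1}² given by the table with ℙ_{a₁a₂}(λ₁,λ₂) = ⅜+¼√2 if (λ₁,λ₂)=(a₁,a₂), ⅜−¼√2 if (λ₁,λ₂)=(1−a₁,1−a₂), and ⅛ otherwise: (i) each ℙ_{a₁a₂} is a probability distribution; (ii) the marginal success rates satisfy ℙ_{a₁a₂}[λ_b = a_b] = ½ + ¼√2 for b = 1,2; and (iii) parity-obliviousness fails: ℙ_{a₁a₂}[λ₁+λ₂ ≡ a₁+a₂ (mod 2)] = ¾. -/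
import Mathlib


/-- Alice's classical hidden-variable distribution on pairs `(λ₁,λ₂) ∈ {0,1}²`,
given her bits `(a₁,a₂)`: weight `⅜+¼√2` on `(a₁,a₂)`, weight `⅜−¼√2` on the
complementary pair `(1−a₁,1−a₂)`, and `⅛` on each of the other two pairs. -/
noncomputable def classicalPOM (a l : Bool × Bool) : ℝ :=
  if l = a then 3/8 + Real.sqrt 2 / 4
  else if l = (!a.1, !a.2) then 3/8 - Real.sqrt 2 / 4
  else 1/8

/-- (i) Each `ℙ_{a₁a₂}` is a probability distribution; (ii) Bob's guess
`X = λ_b` succeeds with probability `½ + ¼√2` for `b = 1,2`; (iii)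
parity-obliviousness fails: the parity of `(λ₁,λ₂)` matches that of `(a₁,a₂)`
with probability `¾ > ½`. -/
theorem classicalPOM_properties (a : Bool × Bool) :
    ((∀ l, 0 ≤ classicalPOM a l) ∧ ∑ l : Bool × Bool, classicalPOM a l = 1) ∧
    ((∑ l : Bool × Bool, if l.1 = a.1 then classicalPOM a l else 0)
        = 1/2 + Real.sqrt 2 / 4 ∧
     (∑ l : Bool × Bool, if l.2 = a.2 then classicalPOM a l else 0)
        = 1/2 + Real.sqrt 2 / 4) ∧
    ((∑ l : Bool × Bool, if xor l.1 l.2 = xor a.1 a.2 then classicalPOM a l else 0)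
        = 3/4 ∧ (1/2 : ℝ) < 3/4) := by
  have h0 : (0:ℝ) ≤ Real.sqrt 2 := Real.sqrt_nonneg 2
  have h2 : Real.sqrt 2 ≤ 1.5 := by
    nlinarith [Real.sq_sqrt (by norm_num : (2:ℝ) ≥ 0), Real.sqrt_nonneg 2]
  obtain ⟨a1, a2⟩ := a
  refine ⟨⟨fun l => ?_, ?_⟩, ⟨?_, ?_⟩, ?_, by norm_num⟩
  · obtain ⟨l1,l2⟩ := l
    cases a1 <;> cases a2 <;> cases l1 <;> cases l2 <;>
      simp [classicalPOM, Prod.ext_iff] <;> nlinarith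
  all_goals cases a1 <;> cases a2 <;>
    simp [classicalPOM, Fintype.sum_prod_type, Prod.ext_iff] <;> ring
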